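/- arXiv:2310.05816 — 3 statements merged into one kernel-verified Lean document; each statement's English description precedes it below -/
import Mathlib

section
/- With φ as above and j ≥ 1, the function F_j(ξ) = ∫_0^∞ e^{-i y ξ} φ(y) y^{-(j+1/2)} dy extends to a function analytic on the open lower half-plane {Im ξ < 0} and continuous up to the real axis away from 0, and satisfies |F_j(ξ)| ≤ C e^{-(d+1)|Im ξ|} for Im ξ ≤ 0, for some constant C. -/
open MeasureTheory

theorem stmt_6 (d : ℝ) (hd : 0 < d) (φ : ℝ → ℝ) (hφ : ContDiff ℝ (⊤ : ℕ∞) φ)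
    (hφ0 : ∀ y : ℝ, y < d + 1 → φ y = 0) (hφ1 : ∀ y : ℝ, y > d + 2 → φ y = 1)
    (hφr : ∀ y : ℝ, φ y ∈ Set.Icc (0:ℝ) 1)
    (j : ℕ) (hj : 1 ≤ j) :
    ∃ G : ℂ → ℂ,
      DifferentiableOn ℂ G {z : ℂ | z.im < 0} ∧
      ContinuousOn G {z : ℂ | z.im ≤ 0 ∧ z ≠ 0} ∧
      (∀ ξ : ℝ, G ξ = ∫ y in Set.Ioi (0:ℝ),
          Complex.exp (-Complex.I * y * ξ) * (φ y) / ((y ^ ((j:ℝ) + 1/2) : ℝ) : ℂ)) ∧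
      ∃ C : ℝ, ∀ z : ℂ, z.im ≤ 0 → ‖G z‖ ≤ C * Real.exp (-(d + 1) * |z.im|) := by
  set p : ℝ := (j : ℝ) + 1/2 with hpdef
  have hp1 : (1:ℝ) < p := by
    have : (1:ℝ) ≤ (j:ℝ) := by exact_mod_cast hj
    rw [hpdef]; linarith
  have hp0 : (0:ℝ) < p := by linarith
  set F : ℂ → ℝ → ℂ := fun z y =>
    Complex.exp (-Complex.I * y * z) * (φ y) / ((y ^ p : ℝ) : ℂ) with hFdef
  -- norm formula
  have hre : ∀ (z : ℂ) (y : ℝ), (-Complex.I * y * z).re = y * z.im := by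
    intro z y
    simp [Complex.mul_re, Complex.mul_im]
  have hnorm : ∀ (z : ℂ) (y : ℝ), 0 < y →
      ‖F z y‖ = Real.exp (y * z.im) * φ y / y ^ p := by
    intro z y hy
    rw [hFdef]
    simp only [norm_div, norm_mul, Complex.norm_exp, hre,
      Complex.norm_real, Real.norm_eq_abs]
    rw [abs_of_nonneg (hφr y).1, abs_of_nonneg (Real.rpow_nonneg hy.le p)]
  -- vanishing
  have hFzero : ∀ (z : ℂ) (y : ℝ), y < d + 1 → F z y = 0 := by
    intro z y hy
    rw [hFdef]; simp [hφ0 y hy]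
  -- dominating function
  set g : ℝ → ℝ := Set.indicator (Set.Ici (d+1)) (fun y => y ^ (-p)) with hgdef
  have hg_nonneg : ∀ y, 0 ≤ g y := by
    intro y
    apply Set.indicator_nonneg
    intro a ha
    exact Real.rpow_nonneg (by simp at ha; linarith) _
  have hg_int : Integrable g (volume.restrict (Set.Ioi (0:ℝ))) := by
    have h1 : IntegrableOn (fun y : ℝ => y ^ (-p)) (Set.Ioi (d+1)) :=
      integrableOn_Ioi_rpow_of_lt (by linarith) (by linarith)
    have h2 : IntegrableOn (fun y : ℝ => y ^ (-p)) (Set.Ici (d+1)) := by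
      rwa [integrableOn_Ici_iff_integrableOn_Ioi]
    have h3 : Integrable g := by
      rw [hgdef, integrable_indicator_iff measurableSet_Ici]
      exact h2
    exact h3.integrableOn
  -- pointwise bounds
  have hFg : ∀ (z : ℂ), z.im ≤ 0 → ∀ y ∈ Set.Ioi (0:ℝ), ‖F z y‖ ≤ g y := by
    intro z hz y hy
    rcases lt_or_ge y (d+1) with h | h
    · rw [hFzero z y h]; simpa using hg_nonneg y
    · rw [hnorm z y hy, hgdef, Set.indicator_of_mem (by exact h)]
      rw [Real.rpow_neg (le_of_lt hy)]
      have h1 : Real.exp (y * z.im) ≤ 1 := by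
        rw [Real.exp_le_one_iff]
        exact mul_nonpos_of_nonneg_of_nonpos (le_of_lt hy) hz
      have h2 : φ y ≤ 1 := (hφr y).2
      have h3 : (0:ℝ) < y ^ p := Real.rpow_pos_of_pos hy p
      rw [div_le_iff₀ h3, inv_mul_cancel₀ h3.ne']
      calc Real.exp (y * z.im) * φ y ≤ 1 * 1 :=
            mul_le_mul h1 h2 (hφr y).1 zero_le_one
        _ = 1 := by ring
  -- sharper bound: e^{(d+1) im z} g y
  have hFg' : ∀ (z : ℂ), z.im ≤ 0 → ∀ y ∈ Set.Ioi (0:ℝ),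
      ‖F z y‖ ≤ Real.exp ((d+1) * z.im) * g y := by
    intro z hz y hy
    rcases lt_or_ge y (d+1) with h | h
    · rw [hFzero z y h, hgdef, Set.indicator_of_notMem (by simpa using h)]
      simp
    · rw [hnorm z y hy, hgdef, Set.indicator_of_mem (by exact h)]
      rw [Real.rpow_neg (le_of_lt hy)]
      have h1 : Real.exp (y * z.im) ≤ Real.exp ((d+1) * z.im) := by
        apply Real.exp_le_exp.mpr
        exact mul_le_mul_of_nonpos_right h hz
      have h2 : φ y ≤ 1 := (hφr y).2
      have h3 : (0:ℝ) < y ^ p := Real.rpow_pos_of_pos hy p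
      rw [div_le_iff₀ h3]
      calc Real.exp (y * z.im) * φ y ≤ Real.exp ((d+1) * z.im) * 1 :=
            mul_le_mul h1 h2 (hφr y).1 (Real.exp_nonneg _)
        _ = Real.exp ((d+1) * z.im) * ((y ^ p)⁻¹ * y ^ p) := by
            rw [inv_mul_cancel₀ h3.ne']
        _ = Real.exp ((d+1) * z.im) * (y ^ p)⁻¹ * y ^ p := by ring
  -- measurability
  have hmeas : ∀ z : ℂ, AEStronglyMeasurable (F z) (volume.restrict (Set.Ioi (0:ℝ))) := by
    intro z
    apply ContinuousOn.aestronglyMeasurable _ measurableSet_Ioi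
    apply ContinuousOn.div
    · apply Continuous.continuousOn
      exact (Complex.continuous_exp.comp
        (((continuous_const.mul Complex.continuous_ofReal).mul continuous_const))).mul
        (Complex.continuous_ofReal.comp hφ.continuous)
    · exact Complex.continuous_ofReal.comp_continuousOn
        (continuousOn_id.rpow_const fun y hy => Or.inl (ne_of_gt hy))
    · intro y hy
      simp only [ne_eq, Complex.ofReal_eq_zero]
      exact (Real.rpow_pos_of_pos hy p).ne'
  have hFint : ∀ z : ℂ, z.im ≤ 0 → Integrable (F z) (volume.restrict (Set.Ioi (0:ℝ))) := by
    intro z hz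
    apply hg_int.mono' (hmeas z)
    filter_upwards [ae_restrict_mem measurableSet_Ioi] with y hy
    exact hFg z hz y hy
  refine ⟨fun z => ∫ y in Set.Ioi (0:ℝ), F z y, ?_, ?_, ?_, ?_⟩
  · -- differentiability
    intro z₀ hz₀
    simp only [Set.mem_setOf_eq] at hz₀
    set ε : ℝ := -z₀.im / 2 with hεdef
    have hε : 0 < ε := by rw [hεdef]; linarith
    set F' : ℂ → ℝ → ℂ := fun z y => (-Complex.I * y) * F z y with hF'def
    have key : ∀ (y : ℝ) (z : ℂ), HasDerivAt (fun w => F w y) (F' z y) z := by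
      intro y z
      have h := (((hasDerivAt_id z).const_mul (-Complex.I * (y:ℂ))).cexp).mul_const
        ((φ y : ℂ) / ((y ^ p : ℝ) : ℂ))
      have hfun : (fun w => F w y) =
          fun w => Complex.exp (-Complex.I * y * w) * ((φ y : ℂ) / ((y ^ p : ℝ) : ℂ)) := by
        funext w; rw [hFdef]; exact (mul_div_assoc _ _ _)
      have hder : F' z y =
          Complex.exp (-Complex.I * y * z) * (-Complex.I * (y:ℂ) * 1) *
            ((φ y : ℂ) / ((y ^ p : ℝ) : ℂ)) := by
        rw [hF'def, hFdef]; ring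
      rw [hfun, hder]
      exact h
    set bound : ℝ → ℝ := fun y => (2/ε) * Real.exp (-(ε/2) * y) with hbdef
    have hF'bound : ∀ y ∈ Set.Ioi (0:ℝ), ∀ z ∈ Metric.ball z₀ ε, ‖F' z y‖ ≤ bound y := by
      intro y hy z hz
      have him : z.im ≤ -ε := by
        have h1 : |(z - z₀).im| ≤ ‖z - z₀‖ := Complex.abs_im_le_norm _
        rw [Metric.mem_ball, dist_eq_norm] at hz
        have h2 : |z.im - z₀.im| < ε := by
          simpa [Complex.sub_im] using lt_of_le_of_lt h1 hz
        have := abs_lt.mp h2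
        rw [hεdef]; linarith [this.2]
      have hnormF' : ‖F' z y‖ = y * ‖F z y‖ := by
        rw [hF'def]
        show ‖-Complex.I * y * F z y‖ = y * ‖F z y‖
        rw [norm_mul]
        congr 1
        simp [abs_of_pos (show (0:ℝ) < y from hy)]
      rcases lt_or_ge y (d+1) with h | h
      · rw [hnormF', hFzero z y h]
        simp only [norm_zero, mul_zero]
        rw [hbdef]; positivity
      · have hy1 : (1:ℝ) ≤ y := by linarith
        rw [hnormF', hnorm z y hy]
        have hyp1 : (1:ℝ) ≤ y ^ p := Real.one_le_rpow hy1 hp0.le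
        have hb1 : Real.exp (y * z.im) * φ y / y ^ p ≤ Real.exp (-ε * y) := by
          have h1 : Real.exp (y * z.im) ≤ Real.exp (-ε * y) := by
            apply Real.exp_le_exp.mpr
            calc y * z.im ≤ y * (-ε) := mul_le_mul_of_nonneg_left him (le_of_lt hy)
              _ = -ε * y := by ring
          calc Real.exp (y * z.im) * φ y / y ^ p ≤ Real.exp (y * z.im) * 1 / 1 := by
                apply div_le_div₀ (by positivity)
                  (mul_le_mul le_rfl (hφr y).2 (hφr y).1 (Real.exp_nonneg _))
                  one_pos hyp1
            _ = Real.exp (y * z.im) := by ring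
            _ ≤ Real.exp (-ε * y) := h1
        have hb2 : y * Real.exp (-ε * y) ≤ bound y := by
          rw [hbdef]
          have h1 : (ε/2)*y + 1 ≤ Real.exp ((ε/2)*y) := Real.add_one_le_exp _
          have h2 : y ≤ (2/ε) * Real.exp ((ε/2)*y) := by
            rw [div_mul_eq_mul_div, le_div_iff₀ hε]
            nlinarith [Real.exp_pos ((ε/2)*y)]
          calc y * Real.exp (-ε * y) ≤ (2/ε) * Real.exp ((ε/2)*y) * Real.exp (-ε * y) :=
                mul_le_mul_of_nonneg_right h2 (Real.exp_nonneg _)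
            _ = (2/ε) * Real.exp (-(ε/2) * y) := by
                rw [mul_assoc, ← Real.exp_add]; ring_nf
        calc y * (Real.exp (y * z.im) * φ y / y ^ p) ≤ y * Real.exp (-ε * y) :=
              mul_le_mul_of_nonneg_left hb1 (le_of_lt hy)
          _ ≤ bound y := hb2
    have hbint : Integrable bound (volume.restrict (Set.Ioi (0:ℝ))) := by
      rw [hbdef]
      exact ((exp_neg_integrableOn_Ioi 0 (by positivity : (0:ℝ) < ε/2))).const_mul _
    have hF'meas : AEStronglyMeasurable (F' z₀) (volume.restrict (Set.Ioi (0:ℝ))) := by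
      rw [hF'def]
      exact ((continuous_const.mul Complex.continuous_ofReal).aestronglyMeasurable).mul
        (hmeas z₀)
    have main := hasDerivAt_integral_of_dominated_loc_of_deriv_le (Metric.ball_mem_nhds z₀ hε)
      (Filter.Eventually.of_forall hmeas) (hFint z₀ (le_of_lt hz₀)) hF'meas
      (by
        filter_upwards [ae_restrict_mem measurableSet_Ioi] with y hy z hz
        exact hF'bound y hy z hz)
      hbint
      (by
        filter_upwards with y z _
        exact key y z)
    exact main.2.differentiableAt.differentiableWithinAt
  · -- continuity
    intro z₀ hz₀
    simp only [Set.mem_setOf_eq] at hz₀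
    apply continuousWithinAt_of_dominated
      (bound := g)
    · exact Filter.Eventually.of_forall hmeas
    · filter_upwards [self_mem_nhdsWithin] with z hz
      filter_upwards [ae_restrict_mem measurableSet_Ioi] with y hy
      exact hFg z hz.1 y hy
    · exact hg_int
    · filter_upwards with y
      apply Continuous.continuousWithinAt
      rw [hFdef]
      exact (Continuous.mul
        (Complex.continuous_exp.comp ((continuous_const.mul continuous_id)))
        continuous_const).div_const _
  · intro ξ; rfl
  · refine ⟨∫ y in Set.Ioi (0:ℝ), g y, ?_⟩
    intro z hz
    have h1 : ‖∫ y in Set.Ioi (0:ℝ), F z y‖ ≤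
        ∫ y in Set.Ioi (0:ℝ), Real.exp ((d+1) * z.im) * g y := by
      apply norm_integral_le_of_norm_le (hg_int.const_mul _)
      filter_upwards [ae_restrict_mem measurableSet_Ioi] with y hy
      exact hFg' z hz y hy
    rw [integral_const_mul] at h1
    have h2 : -(d + 1) * |z.im| = (d+1) * z.im := by
      rw [abs_of_nonpos hz]; ring
    rw [h2]
    calc ‖∫ y in Set.Ioi (0:ℝ), F z y‖
        ≤ Real.exp ((d+1) * z.im) * ∫ y in Set.Ioi (0:ℝ), g y := h1
      _ = (∫ y in Set.Ioi (0:ℝ), g y) * Real.exp ((d+1) * z.im) := by ring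
end

section
/- Suppose σ, τ : ℝ → ℂ are continuous with |σ(x)| ≤ A (1+|x|)^{-α} and |τ(x)| ≤ B (1+|x|)^{-(α+1/2)} for some 0 < α < 1/2, and suppose K : ℝ × ℝ → ℂ is measurable with |K(x,y)| ≤ C (|x|+|y|)^{-3/2} for |x|, |y| ≥ d > 0. Then for |x| ≥ d, |∫_{|y|≥d} K(x,y) τ(y) dy| ≤ M |x|^{-(α+1)} for a constant M depending only on A, B, C, d, α. -/
open MeasureTheory Set Real

/-!
Pointwise, `‖K x y * τ y‖ ≤ B C (|x| + |y|)^(-3/2) |y|^(-(α+1/2))`, and this majorant is even in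
`y`, so everything reduces to `∫₀^∞ (X + t)^(-γ) t^(-β) dt` with `X = |x|`, `β = α + 1/2`,
`γ = 3/2`. Split at `t = X`: on `(0, X]` use `(X + t)^(-γ) ≤ X^(-γ)`, integrable since `β < 1`;
on `(X, ∞)` use `(X + t)^(-γ) ≤ t^(-γ)`, integrable since `β + γ > 1`. Both pieces are
`O(X^(1-β-γ)) = O(X^(-(α+1)))`.
-/

theorem integrable_comp_abs_of_integrableOn_Ioi {f : ℝ → ℝ} (hf : IntegrableOn f (Ioi 0)) :
    Integrable (fun x => f |x|) := by
  have hIoi : IntegrableOn (fun x => f |x|) (Ioi 0) :=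
    hf.congr_fun (fun x hx => by rw [abs_of_pos hx]) measurableSet_Ioi
  have hIic : IntegrableOn (fun x => f |x|) (Iic 0) := by
    have hneg : MeasurableEmbedding fun x : ℝ => -x := (Homeomorph.neg ℝ).measurableEmbedding
    rw [← Measure.map_neg_eq_self (volume : Measure ℝ), hneg.integrableOn_map_iff]
    simp_rw [Function.comp_def, abs_neg, neg_preimage, neg_Iic, neg_zero]
    exact (integrableOn_Ici_iff_integrableOn_Ioi).mpr hIoi
  rw [← integrableOn_univ, ← Iic_union_Ioi (a := (0 : ℝ))]
  exact hIic.union hIoi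

theorem integrableOn_and_setIntegral_le_of_nonneg_of_le {f g : ℝ → ℝ} {s : Set ℝ}
    (hs : MeasurableSet s) (hf : Measurable f) (hg : IntegrableOn g s)
    (hf0 : ∀ t ∈ s, 0 ≤ f t) (hfg : ∀ t ∈ s, f t ≤ g t) :
    IntegrableOn f s ∧ ∫ t in s, f t ≤ ∫ t in s, g t := by
  have hf0' : ∀ᵐ t ∂volume.restrict s, 0 ≤ f t := (ae_restrict_iff' hs).2 (.of_forall hf0)
  have hfg' : ∀ᵐ t ∂volume.restrict s, f t ≤ g t := (ae_restrict_iff' hs).2 (.of_forall hfg)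
  refine ⟨hg.mono' hf.aestronglyMeasurable ?_, integral_mono_of_nonneg hf0' hg hfg'⟩
  filter_upwards [hf0', hfg'] with t h0 h using (norm_of_nonneg h0).trans_le h

section

variable {X β γ t : ℝ}

theorem add_rpow_neg_mul_rpow_neg_le_left (hX : 0 < X) (ht : 0 ≤ t) (hγ : 0 ≤ γ) :
    (X + t) ^ (-γ) * t ^ (-β) ≤ X ^ (-γ) * t ^ (-β) :=
  mul_le_mul_of_nonneg_right (rpow_le_rpow_of_nonpos hX (by linarith) (by linarith))
    (rpow_nonneg ht _)

theorem add_rpow_neg_mul_rpow_neg_le_right (hX : 0 ≤ X) (ht : 0 < t) (hγ : 0 ≤ γ) :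
    (X + t) ^ (-γ) * t ^ (-β) ≤ t ^ (-(β + γ)) :=
  calc (X + t) ^ (-γ) * t ^ (-β) ≤ t ^ (-γ) * t ^ (-β) :=
        mul_le_mul_of_nonneg_right (rpow_le_rpow_of_nonpos ht (by linarith) (by linarith))
          (rpow_nonneg ht.le _)
    _ = t ^ (-(β + γ)) := by rw [← rpow_add ht]; ring_nf

theorem add_rpow_neg_mul_rpow_neg_nonneg (hX : 0 ≤ X) (ht : 0 ≤ t) :
    0 ≤ (X + t) ^ (-γ) * t ^ (-β) := by
  positivity

theorem measurable_add_rpow_neg_mul_rpow_neg :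
    Measurable fun t : ℝ => (X + t) ^ (-γ) * t ^ (-β) := by
  fun_prop

theorem integrableOn_Ioc_rpow_neg_mul_rpow_neg (hX : 0 < X) (hβ : β < 1) :
    IntegrableOn (fun t : ℝ => X ^ (-γ) * t ^ (-β)) (Ioc 0 X) := by
  rw [← intervalIntegrable_iff_integrableOn_Ioc_of_le hX.le]
  exact (intervalIntegral.intervalIntegrable_rpow' (by linarith)).const_mul _

theorem integral_Ioc_rpow_neg_mul_rpow_neg (hX : 0 < X) (hβ : β < 1) :
    ∫ t in Ioc 0 X, X ^ (-γ) * t ^ (-β) = X ^ (1 - β - γ) / (1 - β) := by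
  rw [← intervalIntegral.integral_of_le hX.le, intervalIntegral.integral_const_mul,
    integral_rpow (Or.inl (by linarith)), zero_rpow (by linarith), sub_zero, ← mul_div_assoc,
    ← rpow_add hX]
  ring_nf

theorem integrableOn_Ioi_add_rpow_neg_mul_rpow_neg_and_integral_le (hX : 0 < X) (hγ : 0 ≤ γ)
    (hβ : β < 1) (hβγ : 1 < β + γ) :
    IntegrableOn (fun t => (X + t) ^ (-γ) * t ^ (-β)) (Ioi 0) ∧
      ∫ t in Ioi 0, (X + t) ^ (-γ) * t ^ (-β) ≤
        (1 / (1 - β) + 1 / (β + γ - 1)) * X ^ (1 - β - γ) := by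
  obtain ⟨hint₁, hle₁⟩ := integrableOn_and_setIntegral_le_of_nonneg_of_le measurableSet_Ioc
    measurable_add_rpow_neg_mul_rpow_neg (integrableOn_Ioc_rpow_neg_mul_rpow_neg hX hβ)
    (fun t ht => add_rpow_neg_mul_rpow_neg_nonneg hX.le ht.1.le)
    (fun t ht => add_rpow_neg_mul_rpow_neg_le_left hX ht.1.le hγ)
  obtain ⟨hint₂, hle₂⟩ := integrableOn_and_setIntegral_le_of_nonneg_of_le measurableSet_Ioi
    measurable_add_rpow_neg_mul_rpow_neg
    (integrableOn_Ioi_rpow_of_lt (a := -(β + γ)) (by linarith) hX)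
    (fun t ht => add_rpow_neg_mul_rpow_neg_nonneg hX.le (hX.trans ht).le)
    (fun t ht => add_rpow_neg_mul_rpow_neg_le_right hX.le (hX.trans ht) hγ)
  rw [integral_Ioc_rpow_neg_mul_rpow_neg hX hβ] at hle₁
  rw [integral_Ioi_rpow_of_lt (by linarith) hX, show -(β + γ) + 1 = -(β + γ - 1) by ring,
    neg_div_neg_eq, show -(β + γ - 1) = 1 - β - γ by ring] at hle₂
  rw [← Ioc_union_Ioi_eq_Ioi hX.le]
  refine ⟨hint₁.union hint₂, ?_⟩
  rw [setIntegral_union (Ioc_disjoint_Ioi le_rfl) measurableSet_Ioi hint₁ hint₂]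
  calc _ ≤ X ^ (1 - β - γ) / (1 - β) + X ^ (1 - β - γ) / (β + γ - 1) := add_le_add hle₁ hle₂
    _ = _ := by ring

end

theorem stmt_18 (α d A B C : ℝ) (hα0 : 0 < α) (hα1 : α < 1/2) (hd : 0 < d) :
    ∃ M : ℝ, ∀ (σ τ : ℝ → ℂ) (K : ℝ → ℝ → ℂ),
      Continuous σ → Continuous τ →
      Measurable (fun p : ℝ × ℝ => K p.1 p.2) →
      (∀ x : ℝ, ‖σ x‖ ≤ A * (1 + |x|) ^ (-α)) →
      (∀ x : ℝ, ‖τ x‖ ≤ B * (1 + |x|) ^ (-(α + 1/2))) →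
      (∀ x y : ℝ, d ≤ |x| → d ≤ |y| → ‖K x y‖ ≤ C * (|x| + |y|) ^ (-(3:ℝ)/2)) →
      ∀ x : ℝ, d ≤ |x| →
        ‖∫ y in {y : ℝ | d ≤ |y|}, K x y * τ y‖ ≤ M * |x| ^ (-(α + 1)) := by
  refine ⟨2 * B * C * (1 / (1/2 - α) + 1 / (α + 1)), ?_⟩
  intro σ τ K _ _ _ _ hτ hK x hx
  have hX : 0 < |x| := hd.trans_le hx
  have hB : 0 ≤ B := by simpa using (norm_nonneg _).trans (hτ 0)
  have hC : 0 ≤ C :=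
    nonneg_of_mul_nonneg_left ((norm_nonneg _).trans (hK d d (le_abs_self d) (le_abs_self d)))
      (rpow_pos_of_pos (by positivity) _)
  set F : ℝ → ℝ := fun t => (|x| + t) ^ (-(3/2 : ℝ)) * t ^ (-(α + 1/2))
  obtain ⟨hFint, hFle⟩ := integrableOn_Ioi_add_rpow_neg_mul_rpow_neg_and_integral_le
    (γ := 3/2) (β := α + 1/2) hX (by norm_num) (by linarith) (by linarith)
  have hFabs : Integrable (fun y => B * C * F |y|) :=
    (integrable_comp_abs_of_integrableOn_Ioi hFint).const_mul _
  have hKτ : ∀ y, d ≤ |y| → ‖K x y * τ y‖ ≤ B * C * F |y| := by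
    intro y hy
    have hτy : ‖τ y‖ ≤ B * |y| ^ (-(α + 1/2)) :=
      (hτ y).trans (mul_le_mul_of_nonneg_left
        (rpow_le_rpow_of_nonpos (hd.trans_le hy) (by linarith) (by linarith)) hB)
    calc ‖K x y * τ y‖ = ‖K x y‖ * ‖τ y‖ := norm_mul _ _
      _ ≤ C * (|x| + |y|) ^ (-(3:ℝ)/2) * (B * |y| ^ (-(α + 1/2))) :=
        mul_le_mul (hK x y hx hy) hτy (norm_nonneg _) ((norm_nonneg _).trans (hK x y hx hy))
      _ = B * C * F |y| := by simp only [F, neg_div]; ring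
  calc ‖∫ y in {y : ℝ | d ≤ |y|}, K x y * τ y‖
      ≤ ∫ y in {y : ℝ | d ≤ |y|}, B * C * F |y| :=
        norm_integral_le_of_norm_le hFabs.integrableOn
          ((ae_restrict_iff' (measurableSet_le measurable_const measurable_abs)).2
            (.of_forall hKτ))
    _ ≤ ∫ y, B * C * F |y| :=
        setIntegral_le_integral hFabs (.of_forall fun y =>
          mul_nonneg (mul_nonneg hB hC) (add_rpow_neg_mul_rpow_neg_nonneg hX.le (abs_nonneg y)))
    _ = B * C * (2 * ∫ t in Ioi 0, F t) := by rw [integral_const_mul, integral_comp_abs]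
    _ ≤ B * C * (2 * ((1 / (1 - (α + 1/2)) + 1 / (α + 1/2 + 3/2 - 1)) *
          |x| ^ (1 - (α + 1/2) - 3/2))) := by gcongr
    _ = 2 * B * C * (1 / (1/2 - α) + 1 / (α + 1)) * |x| ^ (-(α + 1)) := by ring_nf
end

section
/- Suppose σ : ℝ → ℂ is continuous with |σ(x)| ≤ A (1+|x|)^{-α} for some 0 < α < 1/2, and K : ℝ × ℝ → ℂ is measurable with |K(x,y)| ≤ C (|x|+|y|)^{-5/2} for |x|, |y| ≥ d > 0. Then for |x| ≥ d, |∫_{|y| ≥ d} K(x,y) σ(y) dy| ≤ M |x|^{-(α+3/2)} for a constant M depending only on A, C, d, α. -/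
open MeasureTheory Set

private lemma neg_pre_integral (g : ℝ → ℝ) (hg : ∀ y, g (-y) = g y) (s : Set ℝ) :
    ∫ y in Neg.neg ⁻¹' s, g y = ∫ y in s, g y := by
  rw [← (Measure.measurePreserving_neg (volume : Measure ℝ)).setIntegral_preimage_emb
      (Homeomorph.neg ℝ).measurableEmbedding g s]
  simp only [hg]

private lemma neg_pre_integrable (g : ℝ → ℝ) (hg : ∀ y, g (-y) = g y) (s : Set ℝ)
    (h : IntegrableOn g s volume) : IntegrableOn g (Neg.neg ⁻¹' s) volume := by
  have := ((Measure.measurePreserving_neg (volume : Measure ℝ)).integrableOn_comp_preimage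
      (Homeomorph.neg ℝ).measurableEmbedding).mpr h
  simpa [Function.comp_def, hg] using this

theorem stmt_19 (α d A C : ℝ) (hα0 : 0 < α) (hα1 : α < 1/2) (hd : 0 < d) :
    ∃ M : ℝ, ∀ (σ : ℝ → ℂ) (K : ℝ → ℝ → ℂ),
      Continuous σ →
      Measurable (fun p : ℝ × ℝ => K p.1 p.2) →
      (∀ x : ℝ, ‖σ x‖ ≤ A * (1 + |x|) ^ (-α)) →
      (∀ x y : ℝ, d ≤ |x| → d ≤ |y| → ‖K x y‖ ≤ C * (|x| + |y|) ^ (-(5:ℝ)/2)) →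
      ∀ x : ℝ, d ≤ |x| →
        ‖∫ y in {y : ℝ | d ≤ |y|}, K x y * σ y‖ ≤ M * |x| ^ (-(α + 3/2)) := by
  refine ⟨|A| * |C| * (2 / (1 - α) + 2), ?_⟩
  intro σ K hσc hKm hσ hK x hx
  set X := |x| with hXdef
  have hX : 0 < X := lt_of_lt_of_le hd hx
  have hα1' : α < 1 := by linarith
  -- A, C are nonnegative
  have hA : 0 ≤ A := by
    have h0 := hσ 0
    simp only [abs_zero, add_zero, Real.one_rpow, mul_one] at h0
    exact le_trans (norm_nonneg _) h0
  have hC : 0 ≤ C := by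
    have h0 := hK d d (by rw [abs_of_pos hd]) (by rw [abs_of_pos hd])
    have hp : (0:ℝ) < (|d| + |d|) ^ (-(5:ℝ)/2) :=
      Real.rpow_pos_of_pos (by rw [abs_of_pos hd]; linarith) _
    nlinarith [norm_nonneg (K d d)]
  -- the integrand and the dominating functions
  set f : ℝ → ℂ := fun y => K x y * σ y with hfdef
  have hfm : Measurable f := (hKm.comp measurable_prodMk_left).mul hσc.measurable
  set q : ℝ := 5/2 + α with hqdef
  set g₁ : ℝ → ℝ := fun y => A * C * X ^ (-(5:ℝ)/2) * |y| ^ (-α) with hg₁def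
  set g₂ : ℝ → ℝ := fun y => A * C * |y| ^ (-q) with hg₂def
  -- pointwise bounds
  have hbase : ∀ y : ℝ, d ≤ |y| → ‖f y‖ ≤ (C * (X + |y|) ^ (-(5:ℝ)/2)) * (A * (1 + |y|) ^ (-α)) := by
    intro y hy
    rw [hfdef, norm_mul]
    exact mul_le_mul (hK x y hx hy) (hσ y) (norm_nonneg _)
      (mul_nonneg hC (Real.rpow_nonneg (by positivity) _))
  have hy0 : ∀ y : ℝ, d ≤ |y| → (0:ℝ) < |y| := fun y hy => lt_of_lt_of_le hd hy
  have hb1 : ∀ y : ℝ, d ≤ |y| → |y| ≤ X → ‖f y‖ ≤ g₁ y := by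
    intro y hy hyX
    refine le_trans (hbase y hy) ?_
    have h1 : (X + |y|) ^ (-(5:ℝ)/2) ≤ X ^ (-(5:ℝ)/2) :=
      Real.rpow_le_rpow_of_nonpos hX (by linarith [abs_nonneg y]) (by norm_num)
    have h2 : (1 + |y|) ^ (-α) ≤ |y| ^ (-α) :=
      Real.rpow_le_rpow_of_nonpos (hy0 y hy) (by linarith) (by linarith)
    calc (C * (X + |y|) ^ (-(5:ℝ)/2)) * (A * (1 + |y|) ^ (-α))
        ≤ (C * X ^ (-(5:ℝ)/2)) * (A * |y| ^ (-α)) := by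
          apply mul_le_mul (by exact mul_le_mul_of_nonneg_left h1 hC)
            (mul_le_mul_of_nonneg_left h2 hA)
            (mul_nonneg hA (Real.rpow_nonneg (by positivity) _))
            (mul_nonneg hC (Real.rpow_nonneg hX.le _))
      _ = g₁ y := by simp only [hg₁def]; ring
  have hb2 : ∀ y : ℝ, X ≤ |y| → ‖f y‖ ≤ g₂ y := by
    intro y hy
    have hdy : d ≤ |y| := le_trans hx hy
    have hy' := hy0 y hdy
    refine le_trans (hbase y hdy) ?_
    have h1 : (X + |y|) ^ (-(5:ℝ)/2) ≤ |y| ^ (-(5:ℝ)/2) :=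
      Real.rpow_le_rpow_of_nonpos hy' (by linarith) (by norm_num)
    have h2 : (1 + |y|) ^ (-α) ≤ |y| ^ (-α) :=
      Real.rpow_le_rpow_of_nonpos hy' (by linarith) (by linarith)
    calc (C * (X + |y|) ^ (-(5:ℝ)/2)) * (A * (1 + |y|) ^ (-α))
        ≤ (C * |y| ^ (-(5:ℝ)/2)) * (A * |y| ^ (-α)) := by
          apply mul_le_mul (mul_le_mul_of_nonneg_left h1 hC)
            (mul_le_mul_of_nonneg_left h2 hA)
            (mul_nonneg hA (Real.rpow_nonneg (by positivity) _))
            (mul_nonneg hC (Real.rpow_nonneg (by positivity) _))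
      _ = g₂ y := by
          simp only [hg₂def, hqdef]
          rw [show -(5/2 + α) = (-(5:ℝ)/2) + (-α) by ring, Real.rpow_add hy']
          ring
  -- integrability of the dominating functions
  have habs_cont : ∀ (p : ℝ) (s : Set ℝ), (∀ y ∈ s, y ≠ 0) →
      ContinuousOn (fun y : ℝ => |y| ^ p) s := by
    intro p s hs y hy
    exact (((Real.continuousAt_rpow_const _ _ (Or.inl (abs_ne_zero.mpr (hs y hy)))).comp
      continuous_abs.continuousAt)).continuousWithinAt
  have hg₁int : IntegrableOn g₁ (Icc d X) volume := by
    refine (((habs_cont (-α) (Icc d X) fun y hy => by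
      have := hy.1; intro h; rw [h] at this; linarith).integrableOn_compact
      isCompact_Icc).const_mul _)
  have hIccpre : Icc (-X) (-d) = Neg.neg ⁻¹' (Icc d X) := by ext y; simp
  have hIoipre : Iio (-X) = Neg.neg ⁻¹' (Ioi X) := by ext y; simp
  have hg₁even : ∀ y : ℝ, g₁ (-y) = g₁ y := fun y => by simp only [hg₁def, abs_neg]
  have hg₂even : ∀ y : ℝ, g₂ (-y) = g₂ y := fun y => by simp only [hg₂def, abs_neg]
  have hg₁int' : IntegrableOn g₁ (Icc (-X) (-d)) volume := by
    rw [hIccpre]; exact neg_pre_integrable g₁ hg₁even _ hg₁int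
  have hq1 : -q < -1 := by rw [hqdef]; linarith
  have hg₂int : IntegrableOn g₂ (Ioi X) volume := by
    have base : IntegrableOn (fun y : ℝ => A * C * y ^ (-q)) (Ioi X) volume :=
      (integrableOn_Ioi_rpow_of_lt hq1 hX).const_mul (A * C)
    refine MeasureTheory.IntegrableOn.congr_fun base (fun y hy => ?_) measurableSet_Ioi
    simp only [hg₂def, abs_of_pos (lt_trans hX hy)]
  have hg₂int' : IntegrableOn g₂ (Iio (-X)) volume := by
    rw [hIoipre]; exact neg_pre_integrable g₂ hg₂even _ hg₂int
  -- integrability of f on the four pieces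
  have hfint : ∀ (s : Set ℝ) (g : ℝ → ℝ), MeasurableSet s → IntegrableOn g s volume →
      (∀ y ∈ s, ‖f y‖ ≤ g y) → IntegrableOn f s volume := by
    intro s g hs hg hbound
    exact Integrable.mono' hg (hfm.aestronglyMeasurable.restrict)
      ((ae_restrict_iff' hs).2 (ae_of_all _ hbound))
  have hmemIcc : ∀ y ∈ Icc d X, d ≤ |y| ∧ |y| ≤ X := by
    intro y hy
    rw [abs_of_pos (lt_of_lt_of_le hd hy.1)]; exact ⟨hy.1, hy.2⟩
  have hmemIcc' : ∀ y ∈ Icc (-X) (-d), d ≤ |y| ∧ |y| ≤ X := by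
    intro y hy
    rw [abs_of_neg (by linarith [hy.2] : y < 0)]; exact ⟨by linarith [hy.2], by linarith [hy.1]⟩
  have hmemIoi : ∀ y ∈ Ioi X, X ≤ |y| := by
    intro y hy; rw [abs_of_pos (lt_trans hX hy)]; exact le_of_lt hy
  have hmemIio : ∀ y ∈ Iio (-X), X ≤ |y| := by
    intro y hy
    have : y < -X := hy
    rw [abs_of_neg (by linarith : y < 0)]; linarith
  have hf1 : IntegrableOn f (Icc d X) volume :=
    hfint _ g₁ measurableSet_Icc hg₁int fun y hy =>
      hb1 y (hmemIcc y hy).1 (hmemIcc y hy).2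
  have hf1' : IntegrableOn f (Icc (-X) (-d)) volume :=
    hfint _ g₁ measurableSet_Icc hg₁int' fun y hy =>
      hb1 y (hmemIcc' y hy).1 (hmemIcc' y hy).2
  have hf2 : IntegrableOn f (Ioi X) volume :=
    hfint _ g₂ measurableSet_Ioi hg₂int fun y hy => hb2 y (hmemIoi y hy)
  have hf2' : IntegrableOn f (Iio (-X)) volume :=
    hfint _ g₂ measurableSet_Iio hg₂int' fun y hy => hb2 y (hmemIio y hy)
  -- split the domain
  have hsplit : {y : ℝ | d ≤ |y|} =
      ((Iio (-X) ∪ Icc (-X) (-d)) ∪ (Icc d X ∪ Ioi X)) := by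
    ext y
    simp only [mem_setOf_eq, mem_union, mem_Iio, mem_Icc, mem_Ioi, le_abs]
    constructor
    · rintro (h | h)
      · rcases le_or_gt y X with h2 | h2
        · exact Or.inr (Or.inl ⟨h, h2⟩)
        · exact Or.inr (Or.inr h2)
      · rcases le_or_gt (-X) y with h2 | h2
        · exact Or.inl (Or.inr ⟨h2, by linarith⟩)
        · exact Or.inl (Or.inl h2)
    · rintro ((h | h) | (h | h))
      · right; linarith
      · right; linarith [h.2]
      · left; exact h.1
      · left; linarith
  have hdisj1 : Disjoint (Iio (-X)) (Icc (-X) (-d)) := by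
    apply disjoint_left.2
    intro y hy hy'
    exact absurd hy'.1 (not_le.2 hy)
  have hdisj2 : Disjoint (Icc d X) (Ioi X) := by
    apply disjoint_left.2
    intro y hy hy'
    exact absurd hy.2 (not_le.2 hy')
  have hdisj3 : Disjoint (Iio (-X) ∪ Icc (-X) (-d)) (Icc d X ∪ Ioi X) := by
    apply disjoint_left.2
    rintro y (hy | hy) (hy' | hy')
    · exact absurd hy'.1 (not_le.2 (by linarith [mem_Iio.mp hy]))
    · exact absurd (mem_Ioi.mp hy') (not_lt.2 (by linarith [mem_Iio.mp hy]))
    · linarith [hy.2, hy'.1]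
    · linarith [hy.2, mem_Ioi.mp hy']
  have heq : ∫ y in {y : ℝ | d ≤ |y|}, f y =
      ((∫ y in Iio (-X), f y) + (∫ y in Icc (-X) (-d), f y)) +
      ((∫ y in Icc d X, f y) + (∫ y in Ioi X, f y)) := by
    rw [hsplit, setIntegral_union hdisj3 ((measurableSet_Icc).union measurableSet_Ioi)
        (hf2'.union hf1') (hf1.union hf2),
      setIntegral_union hdisj1 measurableSet_Icc hf2' hf1',
      setIntegral_union hdisj2 measurableSet_Ioi hf1 hf2]
  -- bound each piece by the integral of the dominating function
  have hn1 : ‖∫ y in Icc d X, f y‖ ≤ ∫ y in Icc d X, g₁ y :=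
    norm_integral_le_of_norm_le hg₁int ((ae_restrict_iff' measurableSet_Icc).2
      (ae_of_all _ fun y hy => hb1 y (hmemIcc y hy).1 (hmemIcc y hy).2))
  have hn1' : ‖∫ y in Icc (-X) (-d), f y‖ ≤ ∫ y in Icc (-X) (-d), g₁ y :=
    norm_integral_le_of_norm_le hg₁int' ((ae_restrict_iff' measurableSet_Icc).2
      (ae_of_all _ fun y hy => hb1 y (hmemIcc' y hy).1 (hmemIcc' y hy).2))
  have hn2 : ‖∫ y in Ioi X, f y‖ ≤ ∫ y in Ioi X, g₂ y :=
    norm_integral_le_of_norm_le hg₂int ((ae_restrict_iff' measurableSet_Ioi).2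
      (ae_of_all _ fun y hy => hb2 y (hmemIoi y hy)))
  have hn2' : ‖∫ y in Iio (-X), f y‖ ≤ ∫ y in Iio (-X), g₂ y :=
    norm_integral_le_of_norm_le hg₂int' ((ae_restrict_iff' measurableSet_Iio).2
      (ae_of_all _ fun y hy => hb2 y (hmemIio y hy)))
  -- evaluate the dominating integrals
  set P : ℝ := X ^ (-(α + 3/2)) with hPdef
  have hP : 0 < P := Real.rpow_pos_of_pos hX _
  have hval1 : ∫ y in Icc d X, g₁ y ≤ A * C / (1 - α) * P := by
    have e1 : ∫ y in Icc d X, g₁ y = A * C * X ^ (-(5:ℝ)/2) * ∫ y in Icc d X, |y| ^ (-α) := by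
      simp only [hg₁def]; exact integral_const_mul _ _
    have e2 : ∫ y in Icc d X, |y| ^ (-α) = ∫ y in Icc d X, y ^ (-α) :=
      setIntegral_congr_fun measurableSet_Icc fun y hy => by
        rw [abs_of_pos (lt_of_lt_of_le hd hy.1)]
    have e3 : ∫ y in Icc d X, y ^ (-α) = (X ^ (-α + 1) - d ^ (-α + 1)) / (-α + 1) := by
      rw [integral_Icc_eq_integral_Ioc, ← intervalIntegral.integral_of_le hx,
        integral_rpow (Or.inl (by linarith))]
    have e4 : (X ^ (-α + 1) - d ^ (-α + 1)) / (-α + 1) ≤ X ^ (-α + 1) / (-α + 1) := by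
      rw [sub_div]
      have hden : (0:ℝ) < -α + 1 := by linarith
      have : 0 ≤ d ^ (-α + 1) / (-α + 1) := div_nonneg (Real.rpow_nonneg hd.le _) hden.le
      linarith
    have eP : X ^ (-(5:ℝ)/2) * X ^ (-α + 1) = P := by
      rw [hPdef, ← Real.rpow_add hX, show (-(5:ℝ)/2 + (-α + 1)) = -(α + 3/2) by ring]
    have e5 : A * C * X ^ (-(5:ℝ)/2) * (X ^ (-α + 1) / (-α + 1)) = A * C / (1 - α) * P := by
      rw [← eP, show -α + 1 = 1 - α by ring]
      ring
    calc ∫ y in Icc d X, g₁ y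
        = A * C * X ^ (-(5:ℝ)/2) * ∫ y in Icc d X, |y| ^ (-α) := e1
      _ ≤ A * C * X ^ (-(5:ℝ)/2) * (X ^ (-α + 1) / (-α + 1)) := by
          rw [e2, e3]
          exact mul_le_mul_of_nonneg_left e4 (by positivity)
      _ = A * C / (1 - α) * P := e5
  have hval1' : ∫ y in Icc (-X) (-d), g₁ y ≤ A * C / (1 - α) * P := by
    rw [hIccpre, neg_pre_integral g₁ hg₁even]
    exact hval1
  have hval2 : ∫ y in Ioi X, g₂ y ≤ A * C * P := by
    have e1 : ∫ y in Ioi X, g₂ y = A * C * ∫ y in Ioi X, y ^ (-q) := by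
      rw [show ∫ y in Ioi X, g₂ y = ∫ y in Ioi X, A * C * |y| ^ (-q) from rfl,
        integral_const_mul]
      congr 1
      refine setIntegral_congr_fun measurableSet_Ioi fun y hy => ?_
      rw [abs_of_pos (lt_trans hX hy)]
    have e2 : ∫ y in Ioi X, y ^ (-q) = -X ^ (-q + 1) / (-q + 1) :=
      integral_Ioi_rpow_of_lt hq1 hX
    have e3 : -X ^ (-q + 1) / (-q + 1) = X ^ (-(α + 3/2)) / (q - 1) := by
      rw [show -q + 1 = -(α + 3/2) by rw [hqdef]; ring, hqdef,
        show (5/2 + α - 1 : ℝ) = α + 3/2 by ring, ← neg_div_neg_eq]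
      simp only [neg_neg]
    have e4 : X ^ (-(α + 3/2)) / (q - 1) ≤ P := by
      rw [hPdef]
      have h1 : (1:ℝ) ≤ q - 1 := by rw [hqdef]; linarith
      calc X ^ (-(α + 3/2)) / (q - 1) ≤ X ^ (-(α + 3/2)) / 1 :=
            div_le_div_of_nonneg_left (Real.rpow_nonneg hX.le _) one_pos h1
        _ = X ^ (-(α + 3/2)) := div_one _
    calc ∫ y in Ioi X, g₂ y = A * C * ∫ y in Ioi X, y ^ (-q) := e1
      _ = A * C * (X ^ (-(α + 3/2)) / (q - 1)) := by rw [e2, e3]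
      _ ≤ A * C * P := mul_le_mul_of_nonneg_left e4 (mul_nonneg hA hC)
  have hval2' : ∫ y in Iio (-X), g₂ y ≤ A * C * P := by
    rw [hIoipre, neg_pre_integral g₂ hg₂even]
    exact hval2
  -- put everything together
  rw [show (∫ y in {y : ℝ | d ≤ |y|}, K x y * σ y) = ∫ y in {y : ℝ | d ≤ |y|}, f y from rfl,
    heq]
  have habsA : |A| = A := abs_of_nonneg hA
  have habsC : |C| = C := abs_of_nonneg hC
  have hfinal : ‖((∫ y in Iio (-X), f y) + (∫ y in Icc (-X) (-d), f y)) +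
      ((∫ y in Icc d X, f y) + (∫ y in Ioi X, f y))‖ ≤
      (A * C * P + A * C / (1 - α) * P) + (A * C / (1 - α) * P + A * C * P) := by
    refine le_trans (norm_add_le _ _) ?_
    refine add_le_add (le_trans (norm_add_le _ _) ?_) (le_trans (norm_add_le _ _) ?_)
    · exact add_le_add (le_trans hn2' hval2') (le_trans hn1' hval1')
    · exact add_le_add (le_trans hn1 hval1) (le_trans hn2 hval2)
  refine le_trans hfinal ?_
  rw [habsA, habsC]
  have hid : (A * C * P + A * C / (1 - α) * P) + (A * C / (1 - α) * P + A * C * P) =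
      A * C * (2 / (1 - α) + 2) * P := by ring
  exact le_of_eq hid
end
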